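/- arXiv:2001.08498 — 2 statements merged into one kernel-verified Lean document; each statement's English description precedes it below -/
import Mathlib

section
/- Let p be a prime and N = pM with p ∤ M. For γ = (a b; c d) ∈ Γ₀(N) set α_γ := (a pb; c/p d) ∈ Γ₀(M). Fix a matrix ω_M = (px y; Mz w) ∈ SL₂(ℤ) (such a matrix exists since gcd(p,M) = 1). Then the coset space Γ∞\Γ₀(M) is the disjoint union of the two sets of cosets {Γ∞·γ : γ ∈ Γ₀(N)} and {Γ∞·(α_γ·ω_M) : γ ∈ Γ₀(N)}. -/
open Matrix MatrixGroups

local notation "SL2Z" => Matrix.SpecialLinearGroup (Fin 2) ℤ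

/-- `Γ₀(K)` as a set of elements of `SL(2,ℤ)`. -/
def Gamma0' (K : ℤ) : Set SL2Z := { γ | K ∣ γ.1 1 0 }

/-- The translation matrix `T = (1 1; 0 1)`. -/
def Tmat : SL2Z := ⟨!![1, 1; 0, 1], by norm_num [Matrix.det_fin_two_of]⟩

/-- `Γ∞ = {±T^t : t ∈ ℤ}`. -/
def GammaInf : Set SL2Z := { A | ∃ t : ℤ, A = Tmat ^ t ∨ A = -(Tmat ^ t) }

/-- The right coset `Γ∞ · δ`. -/
def cosetOf (δ : SL2Z) : Set SL2Z := { x | ∃ u ∈ GammaInf, x = u * δ }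

/-- The coset space `Γ∞ \ Γ₀(K)`, as a set of cosets. -/
def cosets (K : ℤ) : Set (Set SL2Z) := { C | ∃ δ ∈ Gamma0' K, C = cosetOf δ }

/-- The set of cosets `Γ∞ · (α_γ ω)`, `γ ∈ Γ₀(pM)`, where `α_γ = (a pb; c/p d)`. -/
def alphaOmegaSet (p M : ℕ) (ω : SL2Z) : Set (Set SL2Z) :=
  { C | ∃ γ ∈ Gamma0' ((p : ℤ) * M), ∃ α : SL2Z,
      α.1 0 0 = γ.1 0 0 ∧ α.1 0 1 = (p : ℤ) * γ.1 0 1 ∧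
      (p : ℤ) * α.1 1 0 = γ.1 1 0 ∧ α.1 1 1 = γ.1 1 1 ∧
      C = cosetOf (α * ω) }

/-!
A coset `Γ∞ δ` depends only on the bottom row `(c, d)` of `δ`, and `Γ∞` only changes its sign.
For `δ ∈ Γ₀(M)` with `p ∣ c` we have `δ ∈ Γ₀(pM)`. Otherwise `(C, D) := (c, d) ω⁻¹` has `M ∣ C`
and `p ∤ D` (as `p ∣ ω₀₀` and `p ∤ ω₀₁`), so `(pC, D)` is the bottom row of some `γ ∈ Γ₀(pM)`,
whose `α_γ` has bottom row `(C, D)`, and then `α_γ ω` has bottom row `(c, d)`. The families are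
disjoint because the bottom-left entry of `α_γ ω` is `≡ d_γ · ω₁₀ (mod p)`, and `p` divides
neither factor, by `det = 1`, since it divides `ω₀₀` and the top-right entry of `α_γ`.
-/

lemma coe_Tmat_zpow (t : ℤ) : ((Tmat ^ t : SL2Z) : Matrix (Fin 2) (Fin 2) ℤ) = !![1, t; 0, 1] :=
  ModularGroup.coe_T_zpow t

lemma mem_GammaInf_iff {u : SL2Z} : u ∈ GammaInf ↔ u 1 0 = 0 := by
  constructor
  · rintro ⟨t, rfl | rfl⟩ <;> simp [coe_Tmat_zpow]
  · intro h
    have hdet : u 0 0 * u 1 1 = 1 := by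
      have := u.det_coe
      rwa [det_fin_two, h, mul_zero, sub_zero] at this
    rcases Int.eq_one_or_neg_one_of_mul_eq_one' hdet with ⟨ha, hd⟩ | ⟨ha, hd⟩
    · refine ⟨u 0 1, Or.inl ?_⟩
      ext i j; fin_cases i <;> fin_cases j <;> simp [coe_Tmat_zpow, ha, hd, h]
    · refine ⟨-u 0 1, Or.inr ?_⟩
      ext i j; fin_cases i <;> fin_cases j <;> simp [coe_Tmat_zpow, ha, hd, h]

lemma apply_one_zero_mul_of_mem_GammaInf {u : SL2Z} (hu : u ∈ GammaInf) (δ : SL2Z) :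
    (u * δ) 1 0 = u 1 1 * δ 1 0 := by
  simp [Matrix.mul_apply, Fin.sum_univ_two, mem_GammaInf_iff.mp hu]

lemma mul_mem_GammaInf {u v : SL2Z} (hu : u ∈ GammaInf) (hv : v ∈ GammaInf) :
    u * v ∈ GammaInf := by
  rw [mem_GammaInf_iff, apply_one_zero_mul_of_mem_GammaInf hu, mem_GammaInf_iff.mp hv, mul_zero]

lemma inv_mem_GammaInf {u : SL2Z} (hu : u ∈ GammaInf) : u⁻¹ ∈ GammaInf := by
  rw [mem_GammaInf_iff] at hu ⊢
  simp [Matrix.SpecialLinearGroup.SL2_inv_expl, hu]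

lemma cosetOf_mul_of_mem_GammaInf {u : SL2Z} (hu : u ∈ GammaInf) (δ : SL2Z) :
    cosetOf (u * δ) = cosetOf δ := by
  ext x
  constructor
  · rintro ⟨v, hv, rfl⟩
    exact ⟨v * u, mul_mem_GammaInf hv hu, (mul_assoc _ _ _).symm⟩
  · rintro ⟨v, hv, rfl⟩
    exact ⟨v * u⁻¹, mul_mem_GammaInf hv (inv_mem_GammaInf hu), by group⟩

lemma cosetOf_eq_of_row_one_eq {δ₁ δ₂ : SL2Z} (h : δ₁ 1 = δ₂ 1) : cosetOf δ₁ = cosetOf δ₂ := by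
  have hrow : (δ₁ * δ₂⁻¹) 1 = (1 : SL2Z) 1 := by
    rw [← mul_inv_cancel δ₂]
    simp only [Matrix.SpecialLinearGroup.coe_mul, mul_apply_eq_vecMul, h]
  have hmem : δ₁ * δ₂⁻¹ ∈ GammaInf := by
    rw [mem_GammaInf_iff, hrow]; rfl
  rw [← cosetOf_mul_of_mem_GammaInf hmem δ₂, inv_mul_cancel_right]

lemma dvd_apply_one_zero_of_mem_cosetOf {n : ℤ} {x δ : SL2Z} (hx : x ∈ cosetOf δ)
    (hn : n ∣ x 1 0) : n ∣ δ 1 0 := by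
  obtain ⟨u, hu, rfl⟩ := hx
  rw [← inv_mul_cancel_left u δ, apply_one_zero_mul_of_mem_GammaInf (inv_mem_GammaInf hu)]
  exact dvd_mul_of_dvd_right hn _

lemma Gamma0'_natCast (N : ℕ) : Gamma0' N = (CongruenceSubgroup.Gamma0 N : Set SL2Z) := by
  ext A
  simp [Gamma0', CongruenceSubgroup.Gamma0_mem, ZMod.intCast_zmod_eq_zero_iff_dvd]

lemma Gamma0'_anti {a b : ℤ} (h : a ∣ b) : Gamma0' b ⊆ Gamma0' a := fun _ hγ => h.trans hγ

lemma not_dvd_apply_of_dvd_apply_zero_zero {p : ℤ} (hp : Prime p) {A : SL2Z}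
    (h : p ∣ A 0 0) : ¬ p ∣ A 0 1 ∧ ¬ p ∣ A 1 0 :=
  ⟨fun h' => hp.not_isUnit ((Matrix.SpecialLinearGroup.isCoprime_row A 0).isUnit_of_dvd' h h'),
    fun h' => hp.not_isUnit ((Matrix.SpecialLinearGroup.isCoprime_col A 0).isUnit_of_dvd' h h')⟩

section alphaOmega

variable {p M : ℕ} {ω : SL2Z}

lemma cosetOf_mul_mem_alphaOmegaSet {β : SL2Z} (hβ : (M : ℤ) ∣ β 1 0)
    (hp : IsCoprime (p : ℤ) (β 1 1)) : cosetOf (β * ω) ∈ alphaOmegaSet p M ω := by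
  obtain ⟨u, v, huv⟩ := hp.mul_left (Matrix.SpecialLinearGroup.isCoprime_row β 1)
  refine ⟨⟨!![v, -u; p * β 1 0, β 1 1], by rw [det_fin_two_of]; linear_combination huv⟩,
    mul_dvd_mul_left _ hβ,
    ⟨!![v, p * -u; β 1 0, β 1 1], by rw [det_fin_two_of]; linear_combination huv⟩,
    rfl, rfl, rfl, rfl, cosetOf_eq_of_row_one_eq ?_⟩
  simp only [Matrix.SpecialLinearGroup.coe_mul, mul_apply_eq_vecMul]
  congr 1
  ext j; fin_cases j <;> rfl

lemma cosetOf_mem_alphaOmegaSet {δ : SL2Z} (hp : Prime (p : ℤ)) (hω00 : (p : ℤ) ∣ ω 0 0)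
    (hω : ω ∈ Gamma0' M) (hδ : δ ∈ Gamma0' M) (hpδ : ¬ (p : ℤ) ∣ δ 1 0) :
    cosetOf δ ∈ alphaOmegaSet p M ω := by
  have hβ : δ * ω⁻¹ ∈ Gamma0' M := by
    rw [Gamma0'_natCast] at hω hδ ⊢
    exact Subgroup.mul_mem _ hδ (Subgroup.inv_mem _ hω)
  have hβ11 : (δ * ω⁻¹) 1 1 = δ 1 1 * ω 0 0 - δ 1 0 * ω 0 1 := by
    simp only [Matrix.SpecialLinearGroup.coe_mul, Matrix.SpecialLinearGroup.coe_inv,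
      adjugate_fin_two, Matrix.mul_apply, of_apply, cons_val', cons_val_one, cons_val_fin_one,
      Fin.sum_univ_two, cons_val_zero]
    ring
  have hpβ : ¬ (p : ℤ) ∣ (δ * ω⁻¹) 1 1 := by
    rw [hβ11]
    intro h
    have hdvd : (p : ℤ) ∣ δ 1 0 * ω 0 1 := (dvd_sub_right (hω00.mul_left _)).mp h
    exact (hp.dvd_mul.mp hdvd).elim hpδ (not_dvd_apply_of_dvd_apply_zero_zero hp hω00).1
  simpa using cosetOf_mul_mem_alphaOmegaSet (ω := ω) hβ (hp.coprime_iff_not_dvd.mpr hpβ)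

lemma mem_cosets_of_mem_alphaOmegaSet (hp : (p : ℤ) ≠ 0) (hω : ω ∈ Gamma0' M) {C : Set SL2Z}
    (hC : C ∈ alphaOmegaSet p M ω) : C ∈ cosets M := by
  obtain ⟨γ, hγ, α, -, -, h10, -, rfl⟩ := hC
  have hα : α ∈ Gamma0' M := (mul_dvd_mul_iff_left hp).mp (h10 ▸ hγ)
  rw [cosets, Gamma0'_natCast] at *
  exact ⟨α * ω, Subgroup.mul_mem _ hα hω, rfl⟩

lemma cosetOf_notMem_alphaOmegaSet (hp : Prime (p : ℤ)) (hω00 : (p : ℤ) ∣ ω 0 0) {δ : SL2Z}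
    (hpδ : (p : ℤ) ∣ δ 1 0) : cosetOf δ ∉ alphaOmegaSet p M ω := by
  rintro ⟨γ, -, α, -, h01, -, -, hC⟩
  have hδ : δ ∈ cosetOf (α * ω) := hC ▸ ⟨1, mem_GammaInf_iff.mpr rfl, (one_mul δ).symm⟩
  have hαω : (p : ℤ) ∣ α 1 0 * ω 0 0 + α 1 1 * ω 1 0 := by
    simpa [Matrix.mul_apply, Fin.sum_univ_two] using dvd_apply_one_zero_of_mem_cosetOf hδ hpδ
  have hα11 : (p : ℤ) ∣ α 1 1 :=
    (hp.dvd_mul.mp ((dvd_add_right (hω00.mul_left _)).mp hαω)).resolve_right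
      (not_dvd_apply_of_dvd_apply_zero_zero hp hω00).2
  exact hp.not_isUnit
    ((Matrix.SpecialLinearGroup.isCoprime_col α 1).isUnit_of_dvd' ⟨γ 0 1, h01⟩ hα11)

end alphaOmega

theorem statement1_general (p M : ℕ) (hp : p.Prime) (hpM : ¬ p ∣ M)
    (ω : SL2Z) (hω : ∃ x y z w : ℤ, ω.1 = !![(p : ℤ) * x, y; (M : ℤ) * z, w]) :
    cosets (M : ℤ) =
        { C | ∃ γ ∈ Gamma0' ((p : ℤ) * M), C = cosetOf γ } ∪ alphaOmegaSet p M ω ∧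
    { C | ∃ γ ∈ Gamma0' ((p : ℤ) * M), C = cosetOf γ } ∩ alphaOmegaSet p M ω = ∅ := by
  obtain ⟨x, _, z, _, hωm⟩ := hω
  have hω00 : (p : ℤ) ∣ ω 0 0 := ⟨x, by rw [hωm]; rfl⟩
  have hωM : ω ∈ Gamma0' M := ⟨z, by rw [hωm]; rfl⟩
  have hpZ : Prime (p : ℤ) := Nat.prime_iff_prime_int.mp hp
  have hcop : IsCoprime (p : ℤ) M :=
    hpZ.coprime_iff_not_dvd.mpr (Int.natCast_dvd_natCast.not.mpr hpM)
  refine ⟨Set.Subset.antisymm ?_ ?_, ?_⟩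
  · rintro _ ⟨δ, hδ, rfl⟩
    by_cases hpδ : (p : ℤ) ∣ δ 1 0
    · exact Or.inl ⟨δ, hcop.mul_dvd hpδ hδ, rfl⟩
    · exact Or.inr (cosetOf_mem_alphaOmegaSet hpZ hω00 hωM hδ hpδ)
  · rintro _ (⟨γ, hγ, rfl⟩ | hC)
    · exact ⟨γ, Gamma0'_anti (dvd_mul_left _ _) hγ, rfl⟩
    · exact mem_cosets_of_mem_alphaOmegaSet hpZ.ne_zero hωM hC
  · rw [Set.eq_empty_iff_forall_notMem]
    rintro _ ⟨⟨γ, hγ, rfl⟩, hC⟩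
    exact cosetOf_notMem_alphaOmegaSet hpZ hω00 (dvd_of_mul_right_dvd hγ) hC

theorem statement1 (p M : ℕ) (hp : p.Prime) (hM : 0 < M) (hpM : ¬ p ∣ M)
    (ω : SL2Z) (hω : ∃ x y z w : ℤ, ω.1 = !![(p : ℤ) * x, y; (M : ℤ) * z, w]) :
    cosets (M : ℤ) =
        { C | ∃ γ ∈ Gamma0' ((p : ℤ) * M), C = cosetOf γ } ∪ alphaOmegaSet p M ω ∧
    { C | ∃ γ ∈ Gamma0' ((p : ℤ) * M), C = cosetOf γ } ∩ alphaOmegaSet p M ω = ∅ :=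
  statement1_general p M hp hpM ω hω
end

section
/- Let p be a prime and N = pM with p ∤ M. Fix a matrix μ_M = (x y; Mz pw) ∈ SL₂(ℤ) (such a matrix exists since gcd(p,M) = 1), and for γ ∈ Γ₀(N) set β_γ := γ·μ_M ∈ Γ₀(M). Let T := (1 1; 0 1). Then the coset space Γ∞\Γ₀(M) is the disjoint union of the p+1 sets of cosets {Γ∞·γ : γ ∈ Γ₀(N)} and, for each j ∈ {0,1,…,p−1}, {Γ∞·(β_γ·T^j) : γ ∈ Γ₀(N)}. -/
open Matrix MatrixGroups

local notation "SL2Z" => Matrix.SpecialLinearGroup (Fin 2) ℤ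

/-- The set of cosets `Γ∞ · (β_γ T^j)`, `γ ∈ Γ₀(pM)`, where `β_γ = γ μ`. -/
def betaTSet (p M : ℕ) (μ : SL2Z) (j : ℕ) : Set (Set SL2Z) :=
  { C | ∃ γ ∈ Gamma0' ((p : ℤ) * M), C = cosetOf (γ * μ * Tmat ^ j) }

/-!
The coset `Γ∞ δ` determines the bottom row `(c, d)` of `δ` up to sign, hence the point `(c : d)`
of `ℙ¹(𝔽_p)` it reduces to. Since `p ∣ μ₂₂`, for `γ ∈ Γ₀(pM)` the bottom row of `γ μ Tʲ` is
congruent to `d_γ μ₂₁ • (1, j)` modulo `p`, with `d_γ μ₂₁` a unit mod `p`; so the cosets of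
`Γ₀(pM)` and those of the `p` families `γ μ Tʲ` lie over the `p + 1` distinct points `(0 : 1)`
and `(1 : j)`. Conversely, `δ ∈ Γ₀(M)` with `p ∤ c` is `γ μ Tʲ` for `j ≡ d / c` and
`γ = δ (μ Tʲ)⁻¹ ∈ Γ₀(pM)`.
-/

open Matrix.SpecialLinearGroup ModularGroup

lemma Tmat_eq_T : Tmat = T := rfl

lemma mul_apply_one_zero (A B : SL2Z) :
    (A * B).1 1 0 = A.1 1 0 * B.1 0 0 + A.1 1 1 * B.1 1 0 := by
  simp [coe_mul, mul_apply, Fin.sum_univ_two]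

lemma mul_apply_one_one (A B : SL2Z) :
    (A * B).1 1 1 = A.1 1 0 * B.1 0 1 + A.1 1 1 * B.1 1 1 := by
  simp [coe_mul, mul_apply, Fin.sum_univ_two]

lemma dvd_mul_apply_one_one {n : ℤ} {A B : SL2Z} (hA : n ∣ A.1 1 0) (hB : n ∣ B.1 1 1) :
    n ∣ (A * B).1 1 1 := by
  rw [mul_apply_one_one]
  exact dvd_add (hA.mul_right _) (hB.mul_left _)

lemma mul_inv_apply_one_zero (A B : SL2Z) :
    (A * B⁻¹).1 1 0 = A.1 1 0 * B.1 1 1 - A.1 1 1 * B.1 1 0 := by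
  simp [coe_mul, coe_inv, adjugate_fin_two, mul_apply, Fin.sum_univ_two]
  ring

lemma mul_Tmat_pow_apply_one_zero (A : SL2Z) (j : ℕ) : (A * Tmat ^ j).1 1 0 = A.1 1 0 := by
  simp [mul_apply_one_zero, Tmat_eq_T, ← zpow_natCast, coe_T_zpow]

lemma mul_Tmat_pow_apply_one_one (A : SL2Z) (j : ℕ) :
    (A * Tmat ^ j).1 1 1 = A.1 1 0 * j + A.1 1 1 := by
  simp [mul_apply_one_one, Tmat_eq_T, ← zpow_natCast, coe_T_zpow]

lemma isCoprime_of_dvd_apply_one (A : SL2Z) {m n : ℤ} (hm : m ∣ A.1 1 0) (hn : n ∣ A.1 1 1) :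
    IsCoprime n m := by
  obtain ⟨a, ha⟩ := hm
  obtain ⟨b, hb⟩ := hn
  have hdet := A.2
  rw [det_fin_two, ha, hb] at hdet
  exact ⟨A.1 0 0 * b, -(A.1 0 1 * a), by linear_combination hdet⟩

lemma not_dvd_apply_one_zero_of_dvd_apply_one_one {p : ℤ} (hp : Prime p) (A : SL2Z)
    (h : p ∣ A.1 1 1) : ¬ p ∣ A.1 1 0 :=
  fun h' ↦ hp.not_isUnit (isCoprime_self.1 (isCoprime_of_dvd_apply_one A h' h))

lemma exists_unit_apply_one_of_mem_GammaInf {u : SL2Z} (hu : u ∈ GammaInf) (δ : SL2Z) :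
    ∃ ε : ℤˣ, ∀ k, (u * δ).1 1 k = ε * δ.1 1 k := by
  obtain ⟨t, rfl | rfl⟩ := hu
  · refine ⟨1, fun k ↦ ?_⟩
    rw [Units.val_one, one_mul]
    exact congrFun (T_pow_mul_apply_one t δ) k
  · refine ⟨-1, fun k ↦ ?_⟩
    rw [neg_mul, coe_neg, Matrix.neg_apply, Units.val_neg, Units.val_one, neg_one_mul]
    exact congrArg Neg.neg (congrFun (T_pow_mul_apply_one t δ) k)

lemma exists_mem_GammaInf_of_cosetOf_eq {δ δ' : SL2Z} (h : cosetOf δ = cosetOf δ') :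
    ∃ u ∈ GammaInf, δ = u * δ' := by
  have hδ : δ ∈ cosetOf δ := ⟨1, ⟨0, Or.inl (zpow_zero _).symm⟩, (one_mul δ).symm⟩
  rwa [h] at hδ

lemma exists_unit_apply_one_of_cosetOf_eq {δ δ' : SL2Z} (h : cosetOf δ = cosetOf δ') :
    ∃ ε : ℤˣ, ∀ k, δ.1 1 k = ε * δ'.1 1 k := by
  obtain ⟨u, hu, rfl⟩ := exists_mem_GammaInf_of_cosetOf_eq h
  exact exists_unit_apply_one_of_mem_GammaInf hu δ'

lemma exists_lt_dvd_mul_sub {p : ℕ} (hp : p.Prime) {c : ℤ} (hc : ¬ (p : ℤ) ∣ c) (d : ℤ) :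
    ∃ j < p, (p : ℤ) ∣ c * j - d := by
  have : Fact p.Prime := ⟨hp⟩
  have hc' : (c : ZMod p) ≠ 0 := by rwa [Ne, ZMod.intCast_zmod_eq_zero_iff_dvd]
  refine ⟨((d : ZMod p) / c).val, ZMod.val_lt _, ?_⟩
  rw [← ZMod.intCast_zmod_eq_zero_iff_dvd]
  push_cast
  rw [ZMod.natCast_zmod_val, mul_div_cancel₀ _ hc', sub_self]

lemma cosets_mul_subset (m n : ℤ) : cosets (m * n) ⊆ cosets n :=
  fun _ ⟨δ, hδ, hC⟩ ↦ ⟨δ, (dvd_mul_left n m).trans hδ, hC⟩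

section

variable {p M : ℕ} {μ : SL2Z}

lemma betaTSet_subset_cosets (hμ : (M : ℤ) ∣ μ.1 1 0) (j : ℕ) :
    betaTSet p M μ j ⊆ cosets M := by
  rintro _ ⟨γ, hγ, rfl⟩
  refine ⟨γ * μ * Tmat ^ j, ?_, rfl⟩
  show (M : ℤ) ∣ (γ * μ * Tmat ^ j).1 1 0
  rw [mul_Tmat_pow_apply_one_zero, mul_apply_one_zero]
  exact dvd_add (((dvd_mul_left _ _).trans hγ).mul_right _) (hμ.mul_left _)

lemma cosetOf_mem_betaTSet (hp : p.Prime) (hpM : IsCoprime (p : ℤ) M)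
    (hμ10 : (M : ℤ) ∣ μ.1 1 0) (hμ11 : (p : ℤ) ∣ μ.1 1 1) {δ : SL2Z}
    (hδ : δ ∈ Gamma0' M) (hpδ : ¬ (p : ℤ) ∣ δ.1 1 0) : ∃ j < p, cosetOf δ ∈ betaTSet p M μ j := by
  obtain ⟨j, hj, hdvd⟩ := exists_lt_dvd_mul_sub hp hpδ (δ.1 1 1)
  have hentry : (δ * (μ * Tmat ^ j)⁻¹).1 1 0 =
      μ.1 1 0 * (δ.1 1 0 * j - δ.1 1 1) + δ.1 1 0 * μ.1 1 1 := by
    rw [mul_inv_apply_one_zero, mul_Tmat_pow_apply_one_zero, mul_Tmat_pow_apply_one_one]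
    ring
  refine ⟨j, hj, δ * (μ * Tmat ^ j)⁻¹, ?_, by group⟩
  show (p : ℤ) * M ∣ (δ * (μ * Tmat ^ j)⁻¹).1 1 0
  rw [hentry]
  exact hpM.mul_dvd (dvd_add (hdvd.mul_left _) (hμ11.mul_left _))
    (dvd_add (hμ10.mul_right _) (hδ.mul_right _))

theorem cosets_eq_union (hp : p.Prime) (hμ10 : (M : ℤ) ∣ μ.1 1 0)
    (hμ11 : (p : ℤ) ∣ μ.1 1 1) :
    cosets M = cosets (p * M) ∪ ⋃ j ∈ Finset.range p, betaTSet p M μ j := by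
  have hpM : IsCoprime (p : ℤ) M := isCoprime_of_dvd_apply_one μ hμ10 hμ11
  refine subset_antisymm ?_ (Set.union_subset (cosets_mul_subset _ _)
    (Set.iUnion₂_subset fun j _ ↦ betaTSet_subset_cosets hμ10 j))
  rintro _ ⟨δ, hδ, rfl⟩
  by_cases hpδ : (p : ℤ) ∣ δ.1 1 0
  · exact Or.inl ⟨δ, hpM.mul_dvd hpδ hδ, rfl⟩
  · obtain ⟨j, hj, hmem⟩ := cosetOf_mem_betaTSet hp hpM hμ10 hμ11 hδ hpδ
    exact Or.inr (Set.mem_biUnion (Finset.mem_coe.2 (Finset.mem_range.2 hj)) hmem)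

theorem disjoint_cosets_betaTSet (hp : p.Prime) (hμ : (p : ℤ) ∣ μ.1 1 1) (j : ℕ) :
    Disjoint (cosets (p * M)) (betaTSet p M μ j) := by
  rw [Set.disjoint_left]
  rintro _ ⟨γ, hγ, rfl⟩ ⟨γ', hγ', hC⟩
  have hpγ' : (p : ℤ) ∣ γ'.1 1 0 := (dvd_mul_right _ _).trans hγ'
  refine not_dvd_apply_one_zero_of_dvd_apply_one_one (Nat.prime_iff_prime_int.1 hp) _
    (dvd_mul_apply_one_one hpγ' hμ) ?_
  obtain ⟨ε, hε⟩ := exists_unit_apply_one_of_cosetOf_eq hC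
  rw [← mul_Tmat_pow_apply_one_zero _ j, ← Units.dvd_mul_left (u := ε), ← hε]
  exact (dvd_mul_right _ _).trans hγ

theorem disjoint_betaTSet (hp : p.Prime) (hμ : (p : ℤ) ∣ μ.1 1 1) {i j : ℕ} (hi : i < p)
    (hj : j < p) (hij : i ≠ j) : Disjoint (betaTSet p M μ i) (betaTSet p M μ j) := by
  rw [Set.disjoint_left]
  rintro _ ⟨γ, hγ, rfl⟩ ⟨γ', hγ', hC⟩
  have hp' := Nat.prime_iff_prime_int.1 hp
  have hA : (p : ℤ) ∣ (γ * μ).1 1 1 :=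
    dvd_mul_apply_one_one ((dvd_mul_right _ _).trans hγ) hμ
  have hB : (p : ℤ) ∣ (γ' * μ).1 1 1 :=
    dvd_mul_apply_one_one ((dvd_mul_right _ _).trans hγ') hμ
  obtain ⟨ε, hε⟩ := exists_unit_apply_one_of_cosetOf_eq hC
  have h0 := hε 0
  have h1 := hε 1
  simp only [mul_Tmat_pow_apply_one_zero, mul_Tmat_pow_apply_one_one] at h0 h1
  have hdvd : (p : ℤ) ∣ ε * ((γ' * μ).1 1 0 * (j - i)) := by
    rw [show ε * ((γ' * μ).1 1 0 * (j - i)) = (γ * μ).1 1 1 - ε * (γ' * μ).1 1 1 by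
      linear_combination i * h0 - h1]
    exact dvd_sub hA (hB.mul_left _)
  rw [Units.dvd_mul_left] at hdvd
  have hji := (hp'.dvd_or_dvd hdvd).resolve_left
    (not_dvd_apply_one_zero_of_dvd_apply_one_one hp' _ hB)
  exact hij (Nat.ModEq.eq_of_lt_of_lt ((Nat.modEq_iff_dvd).2 hji) hi hj)

end

theorem statement2_general (p M : ℕ) (hp : p.Prime)
    (μ : SL2Z) (hμ : ∃ x y z w : ℤ, μ.1 = !![x, y; (M : ℤ) * z, (p : ℤ) * w]) :
    (cosets (M : ℤ) =
        { C | ∃ γ ∈ Gamma0' ((p : ℤ) * M), C = cosetOf γ } ∪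
          ⋃ j ∈ Finset.range p, betaTSet p M μ j) ∧
    (∀ j : ℕ, j < p →
        { C | ∃ γ ∈ Gamma0' ((p : ℤ) * M), C = cosetOf γ } ∩ betaTSet p M μ j = ∅) ∧
    (∀ i j : ℕ, i < p → j < p → i ≠ j → betaTSet p M μ i ∩ betaTSet p M μ j = ∅) := by
  obtain ⟨x, y, z, w, hμ⟩ := hμ
  have hμ10 : (M : ℤ) ∣ μ.1 1 0 := ⟨z, by simp [hμ]⟩
  have hμ11 : (p : ℤ) ∣ μ.1 1 1 := ⟨w, by simp [hμ]⟩
  exact ⟨cosets_eq_union hp hμ10 hμ11,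
    fun j _ ↦ (disjoint_cosets_betaTSet hp hμ11 j).inter_eq,
    fun _ _ hi hj hij ↦ (disjoint_betaTSet hp hμ11 hi hj hij).inter_eq⟩

theorem statement2 (p M : ℕ) (hp : p.Prime) (hM : 0 < M) (hpM : ¬ p ∣ M)
    (μ : SL2Z) (hμ : ∃ x y z w : ℤ, μ.1 = !![x, y; (M : ℤ) * z, (p : ℤ) * w]) :
    (cosets (M : ℤ) =
        { C | ∃ γ ∈ Gamma0' ((p : ℤ) * M), C = cosetOf γ } ∪
          ⋃ j ∈ Finset.range p, betaTSet p M μ j) ∧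
    (∀ j : ℕ, j < p →
        { C | ∃ γ ∈ Gamma0' ((p : ℤ) * M), C = cosetOf γ } ∩ betaTSet p M μ j = ∅) ∧
    (∀ i j : ℕ, i < p → j < p → i ≠ j → betaTSet p M μ i ∩ betaTSet p M μ j = ∅) :=
  statement2_general p M hp μ hμ
end
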